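/- Let Γ = { ( n + βᵀ(nα + m), nα + m ) : n ∈ ℤ, m ∈ ℤ^d } be a lattice of special form in ℝ × ℝ^d, and let W, W' ⊆ ℝ^d be two bounded Riemann measurable sets. If the model sets Λ(Γ, W) and Λ(Γ, W') are bounded distance equivalent, then there exists a constant C such that for every positive integer N, the inequality |Σ_{n=0}^{N−1} χ_W(x + nα) − Σ_{n=0}^{N−1} χ_{W'}(x + nα)| ≤ C holds for almost every x ∈ ℝ^d. -/

import Mathlib

open MeasureTheory

/-- The multiplicity function `χ_W(x) = Σ_{m ∈ ℤ^d} 1_W(x + m)`. -/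
noncomputable def chiFun {d : ℕ} (W : Set (Fin d → ℝ)) (x : Fin d → ℝ) : ℝ :=
  ∑' k : Fin d → ℤ, Set.indicator W 1 (x + fun i => (k i : ℝ))

/-- The model set obtained from the lattice of special form
`Γ = { (n + βᵀ(nα + m), nα + m) : n ∈ ℤ, m ∈ ℤ^d }` and the window `W`:
`Λ(Γ, W) = { p₁(γ) : γ ∈ Γ, p₂(γ) ∈ W }`. -/
def specialModelSet {d : ℕ} (α β : Fin d → ℝ) (W : Set (Fin d → ℝ)) : Set ℝ :=
  {x | ∃ (n : ℤ) (m : Fin d → ℤ),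
    ((n : ℝ) • α + fun j => (m j : ℝ)) ∈ W ∧
    x = (n : ℝ) + ∑ i, β i * ((n : ℝ) • α + fun j => (m j : ℝ)) i}

/-- Two point sets are bounded distance equivalent: there is a bijection
moving every point a distance at most `K` for some `K > 0`. -/
def BDEquiv {E : Type*} [MetricSpace E] (Λ Λ' : Set E) : Prop :=
  ∃ K : ℝ, 0 < K ∧ ∃ χ : Λ → Λ', Function.Bijective χ ∧ ∀ p : Λ, dist (χ p : E) (p : E) ≤ K

/-!
`chiFun W x` counts the integer translates of `x` lying in `W`, so along the integer orbit
`∑_{a ≤ j < b} χ_W(jα)` counts the indices `(j, m) ∈ ℤ × ℤ^d` with `jα + m ∈ W` and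
`a ≤ j < b`, i.e. the points `j + βᵀ(jα + m)` of `Λ(Γ, W)`, each lying within
`(∑ |βᵢ|) · sup ‖W‖` of its index `j`. The hypothesis on `β` makes the index ↦ point map
injective, so a bounded-distance bijection `Λ(Γ, W) → Λ(Γ, W')` moves indices by a bounded
amount `J`, and the two counts over `[a, b)` differ by at most `2J · sup χ`.

For almost every `x` no translate `x + nα + m` meets `∂W ∪ ∂W'`, so both Birkhoff sums are
locally constant near `x`. Kronecker's theorem then replaces `x` by a point `kα + m`, and
`ℤ^d`-periodicity of `χ` reduces the sums to the integer orbit. Density of `ℤα + ℤ^d` holds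
because a proper closed subgroup of `ℝ^d` is mapped into `ℤ` by a nonzero functional (its
lineal space splits off and the rest is a lattice), which the independence of `1, α₁, …, α_d`
rules out.
-/

open Filter Topology

theorem eventually_mem_iff_of_notMem_frontier {X : Type*} [TopologicalSpace X] {s : Set X} {x : X}
    (hx : x ∉ frontier s) : ∀ᶠ y in 𝓝 x, (y ∈ s ↔ x ∈ s) := by
  rw [← Set.mem_compl_iff, compl_frontier_eq_union_interior] at hx
  rcases hx with hx | hx
  · filter_upwards [mem_interior_iff_mem_nhds.mp hx] with y hy
    exact iff_of_true hy (interior_subset hx)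
  · filter_upwards [mem_interior_iff_mem_nhds.mp hx] with y hy
    exact iff_of_false hy (interior_subset hx)

theorem ae_forall_add_notMem {G : Type*} [AddGroup G] [MeasurableSpace G] [MeasurableAdd G]
    (μ : Measure G) [μ.IsAddRightInvariant] {ι : Type*} [Countable ι] (v : ι → G) {s : Set G}
    (hs : μ s = 0) : ∀ᵐ x ∂μ, ∀ i, x + v i ∉ s :=
  ae_all_iff.2 fun i =>
    measure_eq_zero_iff_ae_notMem.1 ((measure_preimage_add_right μ (v i) s).trans hs)

theorem BDEquiv.symm {E : Type*} [MetricSpace E] {Λ Λ' : Set E} (h : BDEquiv Λ Λ') :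
    BDEquiv Λ' Λ := by
  obtain ⟨K, hK, χ, hχ, hdist⟩ := h
  refine ⟨K, hK, (Equiv.ofBijective χ hχ).symm, (Equiv.ofBijective χ hχ).symm.bijective,
    fun q => ?_⟩
  simpa [dist_comm, Equiv.ofBijective_apply_symm_apply] using
    hdist ((Equiv.ofBijective χ hχ).symm q)

theorem ncard_inter_preimage_Ico_le {ι ι' : Type*} {S : Set ι} {S' : Set ι'} {h : ι → ℤ}
    {h' : ι' → ℤ} {σ : S → S'} (hσ : Function.Injective σ) {J : ℕ}
    (hJ : ∀ p, |h' (σ p) - h p| ≤ J) {a b : ℤ}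
    (hfin : (S' ∩ h' ⁻¹' Set.Ico (a - J) (b + J)).Finite) :
    (S ∩ h ⁻¹' Set.Ico a b).ncard ≤ (S' ∩ h' ⁻¹' Set.Ico (a - J) (b + J)).ncard := by
  have := hfin.to_subtype
  simp only [← Nat.card_coe_set_eq]
  refine Nat.card_le_card_of_injective
    (fun p => ⟨σ ⟨p, p.2.1⟩, (σ _).2, ?_⟩) fun p q hpq => ?_
  · have h1 := hJ ⟨p, p.2.1⟩
    have h2 := p.2.2
    simp only [Set.mem_preimage, Set.mem_Ico, abs_le] at h1 h2 ⊢
    omega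
  · have hval := congrArg Subtype.val hpq
    exact Subtype.ext (Subtype.mk.inj (hσ (Subtype.ext hval)))

theorem sum_Ico_sub_add_le {f : ℤ → ℝ} {M : ℝ} (hM0 : 0 ≤ M) (hM : ∀ n, f n ≤ M)
    (a b : ℤ) (J : ℕ) :
    ∑ n ∈ Finset.Ico (a - J) (b + J), f n ≤ ∑ n ∈ Finset.Ico a b, f n + 2 * J * M := by
  have hsub : Finset.Ico a b ⊆ Finset.Ico (a - J) (b + J) :=
    Finset.Ico_subset_Ico (by omega) (by omega)
  have hcard : ((Finset.Ico (a - J) (b + J) \ Finset.Ico a b).card : ℝ) ≤ 2 * J := by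
    rw [Finset.card_sdiff_of_subset hsub, Int.card_Ico, Int.card_Ico]
    exact_mod_cast (by omega : (b + J - (a - J)).toNat - (b - a).toNat ≤ 2 * J)
  rw [← Finset.sum_sdiff hsub, add_comm]
  gcongr
  calc ∑ n ∈ Finset.Ico (a - J) (b + J) \ Finset.Ico a b, f n
      ≤ (Finset.Ico (a - J) (b + J) \ Finset.Ico a b).card • M :=
        Finset.sum_le_card_nsmul _ _ _ fun n _ => hM n
    _ ≤ 2 * J * M := by rw [nsmul_eq_mul]; gcongr

theorem sum_range_add_eq_sum_Ico (f : ℤ → ℝ) (k : ℤ) (N : ℕ) :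
    ∑ n ∈ Finset.range N, f (k + n) = ∑ j ∈ Finset.Ico k (k + N), f j := by
  induction N with
  | zero => simp
  | succ N ih =>
    rw [Finset.sum_range_succ, ih, Nat.cast_succ, ← add_assoc,
      Finset.sum_Ico_add_eq_sum_Ico_add_one (by omega)]

theorem LinearIndependent.eq_zero_of_sum_intCast_mul_eq_zero {ι : Type*} [Fintype ι] {v : ι → ℝ}
    (hv : LinearIndependent ℚ v) {c : ι → ℤ} (h : ∑ i, (c i : ℝ) * v i = 0) : c = 0 :=
  funext <| Fintype.linearIndependent_iff.1 (hv.restrict_scalars' ℤ) c <| by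
    simpa [zsmul_eq_mul] using h

theorem tendsto_floor_div_mul {ι : Type*} {l : Filter ι} {c : ι → ℝ}
    (hc : ∀ n, 0 < c n) (hlim : Tendsto c l (𝓝 0)) (t : ℝ) :
    Tendsto (fun n => (⌊t / c n⌋ : ℝ) * c n) l (𝓝 t) := by
  rw [tendsto_iff_dist_tendsto_zero]
  refine squeeze_zero (fun _ => dist_nonneg) (fun n => ?_) hlim
  have h1 := (le_div_iff₀ (hc n)).1 (Int.floor_le (t / c n))
  have h2 := (div_lt_iff₀ (hc n)).1 (Int.lt_floor_add_one (t / c n))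
  rw [Real.dist_eq, abs_le]
  constructor <;> linarith

section ClosedAddSubgroup

variable {E : Type*} [NormedAddCommGroup E] [NormedSpace ℝ E]

def AddSubgroup.linealSpace (G : AddSubgroup E) : Submodule ℝ E where
  carrier := {x | ∀ t : ℝ, t • x ∈ G}
  add_mem' hx hy t := by rw [smul_add]; exact G.add_mem (hx t) (hy t)
  zero_mem' t := by rw [smul_zero]; exact G.zero_mem
  smul_mem' c x hx t := by rw [smul_smul]; exact hx (t * c)

theorem AddSubgroup.mem_of_mem_linealSpace {G : AddSubgroup E} {x : E}
    (hx : x ∈ G.linealSpace) : x ∈ G := by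
  simpa using hx 1

theorem AddSubgroup.mem_linealSpace_of_tendsto {G : AddSubgroup E} (hG : IsClosed (G : Set E))
    {ι : Type*} {l : Filter ι} [l.NeBot] {u : ι → E} (hu : ∀ n, u n ∈ G) (hu0 : ∀ n, u n ≠ 0)
    (hlim : Tendsto u l (𝓝 0)) {x : E} (hx : Tendsto (fun n => ‖u n‖⁻¹ • u n) l (𝓝 x)) :
    x ∈ G.linealSpace := fun t => by
  have hc := tendsto_floor_div_mul (fun n => norm_pos_iff.2 (hu0 n))
    (tendsto_norm_zero.comp hlim) t
  refine hG.mem_of_tendsto (f := fun n => (⌊t / ‖u n‖⌋ : ℝ) • u n)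
    ((hc.smul hx).congr fun n => ?_) (Eventually.of_forall fun n => ?_)
  · rw [smul_smul, mul_assoc, mul_inv_cancel₀ (norm_ne_zero_iff.2 (hu0 n)), mul_one]
  · rw [Int.cast_smul_eq_zsmul]
    exact zsmul_mem (hu n) _

variable [FiniteDimensional ℝ E]

theorem AddSubgroup.exists_forall_mem_norm_lt_eq_zero {G : AddSubgroup E}
    (hG : IsClosed (G : Set E)) {U : Submodule ℝ E} (hU : Disjoint G.linealSpace U) :
    ∃ ε > 0, ∀ g ∈ G, g ∈ U → ‖g‖ < ε → g = 0 := by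
  by_contra! h
  choose u huG huU hu hu0 using fun n : ℕ => h (1 / (n + 1)) Nat.one_div_pos_of_nat
  have hsphere : ∀ n, ‖u n‖⁻¹ • u n ∈ Metric.sphere (0 : E) 1 := fun n => by
    simp [norm_smul, norm_ne_zero_iff.2 (hu0 n)]
  obtain ⟨x, hx, φ, hφ, hlim⟩ := (isCompact_sphere (0 : E) 1).tendsto_subseq hsphere
  have hu_lim : Tendsto u atTop (𝓝 0) :=
    squeeze_zero_norm (fun n => (hu n).le) tendsto_one_div_add_atTop_nhds_zero_nat
  have hxG : x ∈ G.linealSpace := G.mem_linealSpace_of_tendsto hG (fun n => huG (φ n))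
    (fun n => hu0 (φ n)) (hu_lim.comp hφ.tendsto_atTop) hlim
  have hxU : x ∈ U := U.closed_of_finiteDimensional.mem_of_tendsto hlim
    (Eventually.of_forall fun n => U.smul_mem _ (huU (φ n)))
  have : x = 0 := (Submodule.disjoint_def.1 hU) x hxG hxU
  simp [this] at hx

theorem exists_linearMap_intValued_of_isZLattice {U : Type*} [NormedAddCommGroup U]
    [NormedSpace ℝ U] [FiniteDimensional ℝ U] [Nontrivial U] (L : Submodule ℤ U)
    [DiscreteTopology L] [IsZLattice ℝ L] :
    ∃ f : U →ₗ[ℝ] ℝ, f ≠ 0 ∧ ∀ x ∈ L, ∃ z : ℤ, f x = z := by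
  let b := (Module.Free.chooseBasis ℤ L).ofZLatticeBasis ℝ L
  obtain ⟨i⟩ := b.index_nonempty
  refine ⟨b.coord i, fun h => by simpa using LinearMap.congr_fun h (b i),
    fun x hx => ⟨(Module.Free.chooseBasis ℤ L).repr ⟨x, hx⟩ i, ?_⟩⟩
  exact Module.Basis.ofZLatticeBasis_repr_apply ℝ L _ ⟨x, hx⟩ i

theorem AddSubgroup.exists_linearMap_intValued (G : AddSubgroup E) (hG : IsClosed (G : Set E))
    (hne : (G : Set E) ≠ Set.univ) :
    ∃ f : E →ₗ[ℝ] ℝ, f ≠ 0 ∧ ∀ g ∈ G, ∃ z : ℤ, f g = z := by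
  -- If `G` spans, `G ∩ U` is a lattice in a complement `U` of the lineal space `V ⊆ G`; projecting
  -- onto `U` along `V` maps `G` into it, so a lattice coordinate after it is integral on `G`.
  by_cases hspan : Submodule.span ℝ (G : Set E) = ⊤
  swap
  · obtain ⟨f, hf0, hf⟩ :=
      (Submodule.span ℝ (G : Set E)).exists_le_ker_of_lt_top (lt_top_iff_ne_top.2 hspan)
    exact ⟨f, hf0, fun g hg => ⟨0, by simpa using hf (Submodule.subset_span hg)⟩⟩
  obtain ⟨U, hVU⟩ := G.linealSpace.exists_isCompl
  obtain ⟨ε, hε, hdisc⟩ := G.exists_forall_mem_norm_lt_eq_zero hG hVU.disjoint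
  let p := U.projectionOnto G.linealSpace hVU.symm
  have hpG : ∀ g ∈ G, (p g : E) ∈ G := fun g hg => by
    rw [Submodule.coe_projectionOnto_apply,
      eq_sub_of_add_eq' (Submodule.projection_add_projection_eq_self hVU g)]
    exact G.sub_mem hg (AddSubgroup.mem_of_mem_linealSpace (Submodule.projection_apply_mem _ _))
  let L : Submodule ℤ U := AddSubgroup.toIntSubmodule (G.comap U.subtype.toAddMonoidHom)
  have : DiscreteTopology L := discreteTopology_iff_isOpen_singleton_zero.2 <|
    Metric.isOpen_singleton_iff.2 ⟨ε, hε, fun y hy =>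
      Subtype.ext <| Subtype.ext <| hdisc _ y.2 (y : U).2 (by simpa using hy)⟩
  have : IsZLattice ℝ L := ⟨by
    rw [eq_top_iff]
    calc ⊤ = (Submodule.span ℝ (G : Set E)).map p := by
          rw [hspan, Submodule.map_top, Submodule.range_projectionOnto]
      _ = Submodule.span ℝ (p '' G) := Submodule.map_span p _
      _ ≤ Submodule.span ℝ L := Submodule.span_mono (by rintro _ ⟨g, hg, rfl⟩; exact hpG g hg)⟩
  have : Nontrivial U := Submodule.nontrivial_iff_ne_bot.2 fun hU => hne <|
    Set.eq_univ_of_forall fun x => AddSubgroup.mem_of_mem_linealSpace <|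
      (eq_top_of_isCompl_bot (hU ▸ hVU)).symm ▸ Submodule.mem_top
  obtain ⟨f, hf0, hfZ⟩ := exists_linearMap_intValued_of_isZLattice L
  refine ⟨f ∘ₗ p, fun h => hf0 (LinearMap.ext fun x => ?_), fun g hg => hfZ _ (hpG g hg)⟩
  simpa [p] using LinearMap.congr_fun h (x : E)

end ClosedAddSubgroup

namespace ModelSet

variable {d : ℕ}

theorem norm_intCast (k : Fin d → ℤ) : ‖(fun i => (k i : ℝ))‖ = ‖k‖ := rfl

theorem finite_norm_intCast_le (r : ℝ) :
    {k : Fin d → ℤ | ‖(fun i => (k i : ℝ))‖ ≤ r}.Finite := by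
  simpa [norm_intCast, Metric.closedBall] using
    (isCompact_closedBall (0 : Fin d → ℤ) r).finite_of_discrete

def windowShifts (W : Set (Fin d → ℝ)) (x : Fin d → ℝ) : Set (Fin d → ℤ) :=
  {k | (x + fun i => (k i : ℝ)) ∈ W}

theorem chiFun_nonneg (W : Set (Fin d → ℝ)) (x : Fin d → ℝ) : 0 ≤ chiFun W x :=
  tsum_nonneg fun _ => Set.indicator_nonneg (fun _ _ => zero_le_one) _

variable {W : Set (Fin d → ℝ)} {R : ℝ}

theorem windowShifts_subset (hW : ∀ w ∈ W, ‖w‖ ≤ R) (x : Fin d → ℝ) :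
    windowShifts W x ⊆ {k | ‖(fun i => (k i : ℝ))‖ ≤ R + ‖x‖} := fun k hk => by
  have := norm_sub_le (x + fun i => (k i : ℝ)) x
  rw [add_sub_cancel_left] at this
  show ‖(fun i => (k i : ℝ))‖ ≤ R + ‖x‖
  linarith [hW (x + fun i => (k i : ℝ)) hk]

theorem windowShifts_finite (hW : ∀ w ∈ W, ‖w‖ ≤ R) (x : Fin d → ℝ) :
    (windowShifts W x).Finite :=
  (finite_norm_intCast_le _).subset (windowShifts_subset hW x)

theorem chiFun_eq_ncard (hW : ∀ w ∈ W, ‖w‖ ≤ R) (x : Fin d → ℝ) :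
    chiFun W x = (windowShifts W x).ncard := by
  have hfin := windowShifts_finite hW x
  change ∑' k, (windowShifts W x).indicator 1 k = _
  rw [tsum_eq_sum (s := hfin.toFinset) fun k hk => Set.indicator_of_notMem (by simpa using hk) _,
    Set.ncard_eq_toFinset_card _ hfin,
    Finset.sum_congr rfl fun k hk => Set.indicator_of_mem (hfin.mem_toFinset.1 hk) 1]
  simp

theorem chiFun_add_intCast (W : Set (Fin d → ℝ)) (x : Fin d → ℝ) (m : Fin d → ℤ) :
    chiFun W (x + fun i => (m i : ℝ)) = chiFun W x := by
  unfold chiFun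
  rw [← (Equiv.addLeft m).tsum_eq fun k => W.indicator 1 (x + fun i => (k i : ℝ))]
  congr! 3 with k
  ext i
  simp [add_assoc]

theorem exists_chiFun_le (hW : ∀ w ∈ W, ‖w‖ ≤ R) : ∃ M : ℝ, ∀ x, chiFun W x ≤ M := by
  refine ⟨{k : Fin d → ℤ | ‖(fun i => (k i : ℝ))‖ ≤ R + 1}.ncard, fun x => ?_⟩
  set y : Fin d → ℝ := fun i => Int.fract (x i)
  have hxy : x = y + fun i => ((⌊x i⌋ : ℤ) : ℝ) := by ext i; simp [y]
  have hy : ‖y‖ ≤ 1 := (pi_norm_le_iff_of_nonneg zero_le_one).2 fun i => by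
    simpa [y, abs_of_nonneg (Int.fract_nonneg (x i))] using (Int.fract_lt_one (x i)).le
  rw [hxy, chiFun_add_intCast, chiFun_eq_ncard hW]
  exact_mod_cast Set.ncard_le_ncard ((windowShifts_subset hW y).trans fun k hk => by
    have : ‖(fun i => (k i : ℝ))‖ ≤ R + ‖y‖ := hk
    show ‖(fun i => (k i : ℝ))‖ ≤ R + 1
    linarith) (finite_norm_intCast_le _)

theorem eventually_chiFun_eq (hW : ∀ w ∈ W, ‖w‖ ≤ R) {x : Fin d → ℝ}
    (hx : ∀ k : Fin d → ℤ, (x + fun i => (k i : ℝ)) ∉ frontier W) :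
    ∀ᶠ y in 𝓝 x, chiFun W y = chiFun W x := by
  set T := {k : Fin d → ℤ | ‖(fun i => (k i : ℝ))‖ ≤ R + (‖x‖ + 1)}
  have hnear : ∀ᶠ y in 𝓝 x, ‖y‖ < ‖x‖ + 1 :=
    continuous_norm.continuousAt.eventually_lt continuousAt_const (lt_add_one _)
  have hT : ∀ᶠ y in 𝓝 x, ∀ k ∈ T,
      ((y + fun i => (k i : ℝ)) ∈ W ↔ (x + fun i => (k i : ℝ)) ∈ W) :=
    (finite_norm_intCast_le _).eventually_all.2 fun k _ =>
      (continuous_add_const _).continuousAt.eventually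
        (eventually_mem_iff_of_notMem_frontier (hx k))
  filter_upwards [hnear, hT] with y hy hyT
  refine tsum_congr fun k => ?_
  by_cases hk : k ∈ T
  · classical
    simp only [Set.indicator_apply, Pi.one_apply, hyT k hk]
  · have hout : ∀ z : Fin d → ℝ, ‖z‖ ≤ ‖x‖ + 1 → k ∉ windowShifts W z := fun z hz hkz => by
      have : ‖(fun i => (k i : ℝ))‖ ≤ R + ‖z‖ := windowShifts_subset hW z hkz
      exact hk (show ‖(fun i => (k i : ℝ))‖ ≤ R + (‖x‖ + 1) by linarith)
    have hyk : (y + fun i => (k i : ℝ)) ∉ W := hout y hy.le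
    have hxk : (x + fun i => (k i : ℝ)) ∉ W := hout x (by linarith [norm_nonneg x])
    rw [Set.indicator_of_notMem hyk, Set.indicator_of_notMem hxk]

/-- `p₂` of the point of `Γ` indexed by `(n, m)`. -/
def internalHom (α : Fin d → ℝ) : ℤ × (Fin d → ℤ) →+ (Fin d → ℝ) :=
  (zmultiplesHom _ α).coprod ((Int.castAddHom ℝ).compLeft (Fin d))

@[simp]
theorem internalHom_apply (α : Fin d → ℝ) (p : ℤ × (Fin d → ℤ)) :
    internalHom α p = (p.1 : ℝ) • α + fun i => (p.2 i : ℝ) := by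
  ext i
  simp [internalHom, Int.cast_smul_eq_zsmul]

theorem dense_range_internalHom {α : Fin d → ℝ}
    (hα : LinearIndependent ℚ (fun o : Option (Fin d) => o.elim (1 : ℝ) α)) :
    Dense (Set.range (internalHom α)) := by
  set G := (internalHom α).range.topologicalClosure
  by_contra h
  have hne : (G : Set (Fin d → ℝ)) ≠ Set.univ := by
    rwa [AddSubgroup.topologicalClosure_coe, AddMonoidHom.coe_range, Ne, ← dense_iff_closure_eq]
  obtain ⟨f, hf0, hfZ⟩ :=
    G.exists_linearMap_intValued (internalHom α).range.isClosed_topologicalClosure hne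
  have hfZ' : ∀ p, ∃ z : ℤ, f (internalHom α p) = z := fun p =>
    hfZ _ ((internalHom α).range.le_topologicalClosure ⟨p, rfl⟩)
  choose z hz using fun i => hfZ' (0, Pi.single i 1)
  obtain ⟨z₀, hz₀⟩ := hfZ' (1, 0)
  have hfe : ∀ i, f (Pi.single i 1) = z i := fun i => by
    rw [← hz i]; congr 1; ext j; simp [Pi.single_apply]
  have hfα : f α = z₀ := by
    rw [← hz₀]; congr 1; ext j; simp
  have hfα' : f α = ∑ i, (z i : ℝ) * α i := by
    conv_lhs => rw [← (Pi.basisFun ℝ (Fin d)).sum_repr α]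
    simp [hfe, mul_comm]
  have hc := hα.eq_zero_of_sum_intCast_mul_eq_zero (c := fun o => o.elim (-z₀) z) (by
    simp only [Fintype.sum_option, Option.elim]
    push_cast
    linarith)
  exact hf0 <| (Pi.basisFun ℝ (Fin d)).ext fun i => by
    simpa [hfe] using congrFun hc (some i)

section Counting

variable (α β : Fin d → ℝ)

def windowIndices (W : Set (Fin d → ℝ)) : Set (ℤ × (Fin d → ℤ)) := internalHom α ⁻¹' W

/-- `p₁` of the point of `Γ` indexed by `p`. -/
def modelPoint (p : ℤ × (Fin d → ℤ)) : ℝ := p.1 + ∑ i, β i * internalHom α p i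

theorem specialModelSet_eq_image (W : Set (Fin d → ℝ)) :
    specialModelSet α β W = modelPoint α β '' windowIndices α W := by
  ext x
  simp [specialModelSet, modelPoint, windowIndices, eq_comm]

theorem modelPoint_eq (p : ℤ × (Fin d → ℤ)) :
    modelPoint α β p = p.1 * (1 + ∑ i, β i * α i) + ∑ i, (p.2 i : ℝ) * β i := by
  simp [modelPoint, mul_add, Finset.sum_add_distrib, Finset.mul_sum, mul_comm, mul_left_comm,
    mul_assoc, add_assoc]

theorem windowIndices_inter_Ico (W : Set (Fin d → ℝ)) (a b : ℤ) :
    windowIndices α W ∩ Prod.fst ⁻¹' Set.Ico a b =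
      ⋃ j ∈ Set.Ico a b, Prod.mk j '' windowShifts W ((j : ℝ) • α) := by
  ext ⟨j, m⟩
  simp [windowIndices, windowShifts, and_comm]

end Counting

variable {α β : Fin d → ℝ} {W W' : Set (Fin d → ℝ)} {R R' : ℝ}

theorem modelPoint_injective
    (hβ : LinearIndependent ℚ (fun o : Option (Fin d) => o.elim ((1 : ℝ) + ∑ i, β i * α i) β)) :
    Function.Injective (modelPoint α β) := by
  intro p q h
  rw [modelPoint_eq, modelPoint_eq] at h
  have hc := hβ.eq_zero_of_sum_intCast_mul_eq_zero (c := fun o => o.elim (p.1 - q.1) (p.2 - q.2))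
    (by simp [Fintype.sum_option, sub_mul, Finset.sum_sub_distrib]; linarith)
  have h1 := congrFun hc none
  have h2 := fun i => congrFun hc (some i)
  simp only [Option.elim, Pi.zero_apply, Pi.sub_apply, sub_eq_zero] at h1 h2
  exact Prod.ext h1 (funext h2)

theorem abs_modelPoint_sub_le (hW : ∀ w ∈ W, ‖w‖ ≤ R) {p : ℤ × (Fin d → ℤ)}
    (hp : p ∈ windowIndices α W) : |modelPoint α β p - p.1| ≤ (∑ i, |β i|) * R := by
  rw [modelPoint, add_sub_cancel_left, Finset.sum_mul]
  refine (Finset.abs_sum_le_sum_abs _ _).trans (Finset.sum_le_sum fun i _ => ?_)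
  rw [abs_mul]
  exact mul_le_mul_of_nonneg_left ((norm_le_pi_norm _ i).trans (hW _ hp)) (abs_nonneg _)

theorem finite_windowIndices_inter_Ico (hW : ∀ w ∈ W, ‖w‖ ≤ R) (a b : ℤ) :
    (windowIndices α W ∩ Prod.fst ⁻¹' Set.Ico a b).Finite := by
  rw [windowIndices_inter_Ico]
  exact (Set.finite_Ico a b).biUnion fun j _ => (windowShifts_finite hW _).image _

theorem ncard_windowIndices_inter_Ico (hW : ∀ w ∈ W, ‖w‖ ≤ R) (a b : ℤ) :
    ((windowIndices α W ∩ Prod.fst ⁻¹' Set.Ico a b).ncard : ℝ) =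
      ∑ j ∈ Finset.Ico a b, chiFun W ((j : ℝ) • α) := by
  rw [windowIndices_inter_Ico, (Set.finite_Ico a b).ncard_biUnion
    (fun j _ => (windowShifts_finite hW _).image _), ← Finset.coe_Ico, finsum_mem_coe_finset]
  · push_cast
    exact Finset.sum_congr rfl fun j _ => by
      rw [Set.ncard_image_of_injective _ (Prod.mk_right_injective j), chiFun_eq_ncard hW]
  · intro i _ j _ hij
    exact Set.disjoint_left.2 fun _ ⟨_, _, hi⟩ ⟨_, _, hj⟩ =>
      hij (congrArg Prod.fst (hi.trans hj.symm))

noncomputable def modelPointEquiv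
    (hβ : LinearIndependent ℚ (fun o : Option (Fin d) => o.elim ((1 : ℝ) + ∑ i, β i * α i) β))
    (W : Set (Fin d → ℝ)) : windowIndices α W ≃ specialModelSet α β W :=
  (Equiv.Set.imageOfInjOn _ _ (modelPoint_injective hβ).injOn).trans
    (Equiv.setCongr (specialModelSet_eq_image α β W).symm)

theorem exists_injective_windowIndices_shift
    (hβ : LinearIndependent ℚ (fun o : Option (Fin d) => o.elim ((1 : ℝ) + ∑ i, β i * α i) β))
    (hW : ∀ w ∈ W, ‖w‖ ≤ R) (hW' : ∀ w ∈ W', ‖w‖ ≤ R')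
    (h : BDEquiv (specialModelSet α β W) (specialModelSet α β W')) :
    ∃ (σ : windowIndices α W → windowIndices α W') (J : ℕ), Function.Injective σ ∧
      ∀ p, |(σ p : ℤ × (Fin d → ℤ)).1 - (p : ℤ × (Fin d → ℤ)).1| ≤ J := by
  obtain ⟨K, -, χ, hχ, hK⟩ := h
  let e := modelPointEquiv hβ W
  let e' := modelPointEquiv hβ W'
  refine ⟨e'.symm ∘ χ ∘ e, ⌈(∑ i, |β i|) * R + (∑ i, |β i|) * R' + K⌉₊,
    e'.symm.injective.comp (hχ.1.comp e.injective), fun p => ?_⟩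
  have hq : modelPoint α β (e'.symm (χ (e p))) = χ (e p) :=
    congrArg Subtype.val (e'.apply_symm_apply (χ (e p)))
  have h1 := abs_modelPoint_sub_le (β := β) hW p.2
  have h2 := abs_modelPoint_sub_le (β := β) hW' (e'.symm (χ (e p))).2
  have h3 := hK (e p)
  rw [Real.dist_eq, ← hq] at h3
  change |_ - modelPoint α β p| ≤ K at h3
  have h4 := Nat.le_ceil ((∑ i, |β i|) * R + (∑ i, |β i|) * R' + K)
  have : (|(e'.symm (χ (e p)) : ℤ × (Fin d → ℤ)).1 - (p : ℤ × (Fin d → ℤ)).1| : ℝ) ≤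
      ⌈(∑ i, |β i|) * R + (∑ i, |β i|) * R' + K⌉₊ := by
    rw [abs_le] at h1 h2 h3 ⊢
    constructor <;> linarith
  exact_mod_cast this

theorem exists_sum_Ico_chiFun_le
    (hβ : LinearIndependent ℚ (fun o : Option (Fin d) => o.elim ((1 : ℝ) + ∑ i, β i * α i) β))
    (hW : ∀ w ∈ W, ‖w‖ ≤ R) (hW' : ∀ w ∈ W', ‖w‖ ≤ R')
    (h : BDEquiv (specialModelSet α β W) (specialModelSet α β W')) :
    ∃ C, ∀ a b : ℤ, ∑ j ∈ Finset.Ico a b, chiFun W ((j : ℝ) • α) ≤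
      ∑ j ∈ Finset.Ico a b, chiFun W' ((j : ℝ) • α) + C := by
  obtain ⟨σ, J, hσ, hJ⟩ := exists_injective_windowIndices_shift hβ hW hW' h
  obtain ⟨M, hM⟩ := exists_chiFun_le hW'
  refine ⟨2 * J * M, fun a b => ?_⟩
  have hcount := ncard_inter_preimage_Ico_le (h := Prod.fst) (h' := Prod.fst) hσ hJ
    (finite_windowIndices_inter_Ico hW' (a - J) (b + J))
  rw [← ncard_windowIndices_inter_Ico hW]
  calc _ ≤ ((windowIndices α W' ∩ Prod.fst ⁻¹' Set.Ico (a - J) (b + J)).ncard : ℝ) := by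
        exact_mod_cast hcount
    _ ≤ _ := by
      rw [ncard_windowIndices_inter_Ico hW']
      exact sum_Ico_sub_add_le ((chiFun_nonneg W' 0).trans (hM 0)) (fun _ => hM _) a b J

theorem exists_abs_sum_Ico_chiFun_sub_le
    (hβ : LinearIndependent ℚ (fun o : Option (Fin d) => o.elim ((1 : ℝ) + ∑ i, β i * α i) β))
    (hW : ∀ w ∈ W, ‖w‖ ≤ R) (hW' : ∀ w ∈ W', ‖w‖ ≤ R')
    (h : BDEquiv (specialModelSet α β W) (specialModelSet α β W')) :
    ∃ C, ∀ a b : ℤ, |∑ j ∈ Finset.Ico a b, chiFun W ((j : ℝ) • α) -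
      ∑ j ∈ Finset.Ico a b, chiFun W' ((j : ℝ) • α)| ≤ C := by
  obtain ⟨C, hC⟩ := exists_sum_Ico_chiFun_le hβ hW hW' h
  obtain ⟨C', hC'⟩ := exists_sum_Ico_chiFun_le hβ hW' hW h.symm
  exact ⟨max C C', fun a b => abs_sub_le_iff.2
    ⟨by linarith [hC a b, le_max_left C C'], by linarith [hC' a b, le_max_right C C']⟩⟩

theorem exists_sum_range_chiFun_eq_sum_Ico
    (hα : LinearIndependent ℚ (fun o : Option (Fin d) => o.elim (1 : ℝ) α))
    (hW : ∀ w ∈ W, ‖w‖ ≤ R) (hW' : ∀ w ∈ W', ‖w‖ ≤ R') {x : Fin d → ℝ}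
    (hx : ∀ p, x + internalHom α p ∉ frontier W ∪ frontier W') (N : ℕ) :
    ∃ k : ℤ,
      ∑ n ∈ Finset.range N, chiFun W (x + (n : ℝ) • α) =
        ∑ j ∈ Finset.Ico k (k + N), chiFun W ((j : ℝ) • α) ∧
      ∑ n ∈ Finset.range N, chiFun W' (x + (n : ℝ) • α) =
        ∑ j ∈ Finset.Ico k (k + N), chiFun W' ((j : ℝ) • α) := by
  have hx' (n : ℕ) (k : Fin d → ℤ) :
      (x + (n : ℝ) • α + fun i => (k i : ℝ)) ∉ frontier W ∪ frontier W' := by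
    simpa [add_assoc] using hx (n, k)
  have hev : ∀ᶠ z in 𝓝 x, ∀ n ∈ Finset.range N,
      chiFun W (z + (n : ℝ) • α) = chiFun W (x + (n : ℝ) • α) ∧
      chiFun W' (z + (n : ℝ) • α) = chiFun W' (x + (n : ℝ) • α) :=
    (Filter.eventually_all_finset _).2 fun n _ => (continuous_add_const _).continuousAt.eventually
      ((eventually_chiFun_eq hW fun k hk => hx' n k (Or.inl hk)).and
        (eventually_chiFun_eq hW' fun k hk => hx' n k (Or.inr hk)))
  obtain ⟨_, hz, ⟨k, m⟩, rfl⟩ :=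
    (hev.and_frequently (mem_closure_iff_frequently.1 (dense_range_internalHom hα x))).exists
  have hshift (V : Set (Fin d → ℝ)) (n : ℕ) :
      chiFun V (internalHom α (k, m) + (n : ℝ) • α) = chiFun V (((k + n : ℤ) : ℝ) • α) := by
    rw [internalHom_apply, add_right_comm, ← add_smul, chiFun_add_intCast]
    push_cast; rfl
  refine ⟨k, ?_, ?_⟩ <;>
    rw [← sum_range_add_eq_sum_Ico (fun j : ℤ => chiFun _ ((j : ℝ) • α))] <;>
    refine Finset.sum_congr rfl fun n hn => ?_
  · rw [← (hz n hn).1, hshift]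
  · rw [← (hz n hn).2, hshift]

end ModelSet

open ModelSet in
/-- Let `Γ` be a lattice of special form with parameters `α, β`, and let `W, W' ⊆ ℝ^d`
be bounded Riemann measurable sets. If `Λ(Γ, W)` and `Λ(Γ, W')` are bounded distance
equivalent, then there is a constant `C` such that for every `N`, the Birkhoff sums of
`χ_W` and `χ_{W'}` along `α` up to time `N` differ by at most `C` almost everywhere. -/
theorem bde_modelSets_implies_bounded_discrepancy {d : ℕ} (α β : Fin d → ℝ)
    (hα : LinearIndependent ℚ (fun o : Option (Fin d) => o.elim (1 : ℝ) α))
    (hβ : LinearIndependent ℚ (fun o : Option (Fin d) =>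
      o.elim ((1 : ℝ) + ∑ i, β i * α i) β))
    (W W' : Set (Fin d → ℝ))
    (hWbd : Bornology.IsBounded W) (hW'bd : Bornology.IsBounded W')
    (hWrm : volume (frontier W) = 0) (hW'rm : volume (frontier W') = 0)
    (hbde : BDEquiv (specialModelSet α β W) (specialModelSet α β W')) :
    ∃ C : ℝ, ∀ N : ℕ, 0 < N → ∀ᵐ x ∂(volume : Measure (Fin d → ℝ)),
      |∑ n ∈ Finset.range N, chiFun W (x + (n : ℝ) • α) -
        ∑ n ∈ Finset.range N, chiFun W' (x + (n : ℝ) • α)| ≤ C := by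
  obtain ⟨R, hR⟩ := hWbd.exists_norm_le
  obtain ⟨R', hR'⟩ := hW'bd.exists_norm_le
  obtain ⟨C, hC⟩ := exists_abs_sum_Ico_chiFun_sub_le hβ hR hR' hbde
  refine ⟨C, fun N _ => ?_⟩
  filter_upwards [ae_forall_add_notMem volume (internalHom α) (measure_union_null hWrm hW'rm)]
    with x hx
  obtain ⟨k, hkW, hkW'⟩ := exists_sum_range_chiFun_eq_sum_Ico hα hR hR' hx N
  rw [hkW, hkW']
  exact hC k (k + N)
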